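/- arXiv:0705.2932 — 3 statements merged into one kernel-verified Lean document; each statement's English description precedes it below -/
import Mathlib

section
/- For every natural number n, Σ_{λ ∈ P(n)} ℓ(λ) = Σ_{λ ∈ P(n)} (ℓ((λ^r)~) + ℓ(λ^e)), where the sums run over all partitions λ of n and (λ^r)~ denotes the 2-Glaisher image of the strict partition λ^r. -/
/-!
Since `ℓ(λ) = ℓ(λ^o) + ℓ(λ^e)` with `λ^o` the odd parts, it suffices that `λ ↦ λ^o` and
`λ ↦ (λ^r)~` have the same total length over `P(n)`. Writing `λ = λ^r ∪ 2λ^d`, the map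
`ψ : λ ↦ (λ^r)~ ∪ 2λ^d` on `P(n)` satisfies `ψ(λ)^o = (λ^r)~` and `ψ(λ)^e = λ^d`.
It is injective, hence a permutation of the finite set `P(n)`, because the 2-Glaisher map
is injective on strict partitions: the multiplicity of `q` in `μ̃` is `∑ 2^a` over the
parts `2^a q` of `μ`, and a binary expansion determines its exponents.
-/

/-- `s` is (the multiset of parts of) a partition of `n`: all parts are positive and sum to `n`. -/
def IsPartitionOf (n : ℕ) (s : Multiset ℕ) : Prop :=
  (∀ x ∈ s, 0 < x) ∧ s.sum = n

/-- `λ^r`: the part `i` occurs once if its multiplicity in `s` is odd, and not at all otherwise. -/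
def rPart (s : Multiset ℕ) : Multiset ℕ :=
  s.dedup.filter (fun i => Odd (s.count i))

/-- `λ^d`: the part `i` occurs `⌊m_i(λ)/2⌋` times (i.e. `(m_i-1)/2` if `m_i` odd, `m_i/2` if even). -/
def dPart (s : Multiset ℕ) : Multiset ℕ :=
  ∑ i ∈ s.toFinset, Multiset.replicate (s.count i / 2) i

/-- `λ^o`: the odd parts of `λ`. -/
def oPart (s : Multiset ℕ) : Multiset ℕ :=
  s.filter (fun x => Odd x)

/-- `λ^e`: the halves of the even parts of `λ`. -/
def ePart (s : Multiset ℕ) : Multiset ℕ :=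
  (s.filter (fun x => Even x)).map (fun x => x / 2)

/-- The `p`-Glaisher map: each part `x = p^a * q` (with `p ∤ q`) is replaced by `p^a` copies of `q`. -/
def glaisher (p : ℕ) (s : Multiset ℕ) : Multiset ℕ :=
  s.bind (fun x => Multiset.replicate (p ^ (Nat.factorization x p)) (x / p ^ (Nat.factorization x p)))

/-- `λ^{r(p)}`: the part `i` occurs `m_i(λ) mod p` times. -/
def rPartP (p : ℕ) (s : Multiset ℕ) : Multiset ℕ :=
  ∑ i ∈ s.toFinset, Multiset.replicate (s.count i % p) i

/-- `λ^{d(p)}`: the part `i` occurs `(m_i(λ) - (m_i(λ) mod p))/p` times. -/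
def dPartP (p : ℕ) (s : Multiset ℕ) : Multiset ℕ :=
  ∑ i ∈ s.toFinset, Multiset.replicate (s.count i / p) i

lemma count_rPart (s : Multiset ℕ) (i : ℕ) : (rPart s).count i = s.count i % 2 := by
  by_cases hi : i ∈ s
  · rw [rPart, Multiset.count_filter, Multiset.count_dedup, if_pos hi]
    split_ifs with h
    · exact (Nat.odd_iff.mp h).symm
    · exact (Nat.not_odd_iff.mp h).symm
  · simp [rPart, hi]

lemma count_dPart (s : Multiset ℕ) (i : ℕ) : (dPart s).count i = s.count i / 2 := by
  rw [dPart, Multiset.count_sum']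
  by_cases hi : i ∈ s
  · rw [Finset.sum_eq_single i (fun b _ hb => by simp [Multiset.count_replicate, hb])
      (by simp [hi]), Multiset.count_replicate_self]
  · rw [Multiset.count_eq_zero_of_notMem hi]
    exact Finset.sum_eq_zero fun b hb => Multiset.count_eq_zero_of_notMem fun h =>
      hi (Multiset.eq_of_mem_replicate h ▸ Multiset.mem_toFinset.mp hb)

lemma rPart_add_two_nsmul_dPart (s : Multiset ℕ) : rPart s + 2 • dPart s = s := by
  ext i
  simp only [Multiset.count_add, Multiset.count_nsmul, count_rPart, count_dPart]
  omega

lemma rPart_le (s : Multiset ℕ) : rPart s ≤ s :=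
  Multiset.le_iff_count.mpr fun i => by rw [count_rPart]; exact Nat.mod_le _ _

lemma dPart_le (s : Multiset ℕ) : dPart s ≤ s :=
  Multiset.le_iff_count.mpr fun i => by rw [count_dPart]; exact Nat.div_le_self _ _

lemma nodup_rPart (s : Multiset ℕ) : (rPart s).Nodup :=
  (Multiset.nodup_dedup s).filter _

lemma card_eq_card_oPart_add_card_ePart (s : Multiset ℕ) :
    Multiset.card s = Multiset.card (oPart s) + Multiset.card (ePart s) := by
  rw [oPart, ePart, Multiset.card_map, ← Multiset.card_add]
  conv_lhs => rw [← Multiset.filter_add_not (fun x => Odd x) s]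
  simp only [Nat.not_odd_iff_even]

lemma sum_glaisher (p : ℕ) (s : Multiset ℕ) : (glaisher p s).sum = s.sum := by
  induction s using Multiset.induction with
  | empty => simp [glaisher]
  | cons a s ih =>
    rw [glaisher, Multiset.cons_bind, Multiset.sum_add, ← glaisher, ih, Multiset.sum_cons,
      Multiset.sum_replicate, smul_eq_mul, Nat.mul_div_cancel' (Nat.ordProj_dvd a p)]

lemma not_dvd_of_mem_glaisher {p : ℕ} (hp : p.Prime) {s : Multiset ℕ} (hs : 0 ∉ s) {y : ℕ}
    (hy : y ∈ glaisher p s) : ¬p ∣ y := by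
  obtain ⟨x, hx, hy⟩ := Multiset.mem_bind.mp hy
  rw [Multiset.eq_of_mem_replicate hy]
  exact Nat.not_dvd_ordCompl hp (ne_of_mem_of_not_mem hx hs)

lemma odd_of_mem_glaisher_two {s : Multiset ℕ} (hs : 0 ∉ s) {y : ℕ} (hy : y ∈ glaisher 2 s) :
    Odd y :=
  Nat.not_even_iff_odd.mp fun h => not_dvd_of_mem_glaisher Nat.prime_two hs hy h.two_dvd

lemma eq_of_ordCompl_eq_of_factorization_eq {p a b : ℕ} (hc : ordCompl[p] a = ordCompl[p] b)
    (hf : a.factorization p = b.factorization p) : a = b := by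
  rw [← Nat.ordProj_mul_ordCompl_eq_self a p, ← Nat.ordProj_mul_ordCompl_eq_self b p, hc, hf]

lemma count_glaisher_of_nodup (p : ℕ) {s : Multiset ℕ} (hs : s.Nodup) (q : ℕ) :
    (glaisher p s).count q =
      ∑ k ∈ (s.toFinset.filter fun b => ordCompl[p] b = q).image (Nat.factorization · p),
        p ^ k := by
  rw [Finset.sum_image fun a ha b hb hab => eq_of_ordCompl_eq_of_factorization_eq
      ((Finset.mem_filter.mp ha).2.trans (Finset.mem_filter.mp hb).2.symm) hab,
    Finset.sum_filter, Finset.sum_eq_multiset_sum, Multiset.toFinset_val,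
    Multiset.dedup_eq_self.mpr hs, glaisher, Multiset.count_bind]
  simp only [Multiset.count_replicate, eq_comm]

lemma mem_iff_factorization_mem_bitIndices_count_glaisher {s : Multiset ℕ} (hs : s.Nodup)
    (x : ℕ) :
    x ∈ s ↔ x.factorization 2 ∈ ((glaisher 2 s).count (ordCompl[2] x)).bitIndices := by
  rw [count_glaisher_of_nodup 2 hs, ← List.mem_toFinset, Finset.toFinset_bitIndices_sum_two_pow]
  simp only [Finset.mem_image, Finset.mem_filter, Multiset.mem_toFinset]
  refine ⟨fun hx => ⟨x, ⟨hx, rfl⟩, rfl⟩, ?_⟩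
  rintro ⟨b, ⟨hb, hc⟩, hf⟩
  rwa [← eq_of_ordCompl_eq_of_factorization_eq hc hf]

lemma glaisher_two_injOn : Set.InjOn (glaisher 2) {s | s.Nodup} := fun s hs t ht hst =>
  (Multiset.Nodup.ext hs ht).mpr fun x => by
    rw [mem_iff_factorization_mem_bitIndices_count_glaisher hs,
      mem_iff_factorization_mem_bitIndices_count_glaisher ht, hst]

namespace Nat.Partition

variable {n : ℕ}

lemma zero_notMem_rPart (μ : n.Partition) : 0 ∉ rPart μ.parts := fun h =>
  (μ.parts_pos (Multiset.mem_of_le (rPart_le _) h)).ne rfl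

def glaisherSplit (μ : n.Partition) : n.Partition where
  parts := glaisher 2 (rPart μ.parts) + (dPart μ.parts).map (2 * ·)
  parts_pos {i} hi := by
    rcases Multiset.mem_add.mp hi with hi | hi
    · exact (odd_of_mem_glaisher_two μ.zero_notMem_rPart hi).pos
    · obtain ⟨x, hx, rfl⟩ := Multiset.mem_map.mp hi
      have := μ.parts_pos (Multiset.mem_of_le (dPart_le _) hx)
      omega
  parts_sum := by
    rw [Multiset.sum_add, sum_glaisher, Multiset.sum_map_mul_left, Multiset.map_id',
      ← smul_eq_mul, ← Multiset.sum_nsmul, ← Multiset.sum_add, rPart_add_two_nsmul_dPart,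
      μ.parts_sum]

lemma oPart_glaisherSplit (μ : n.Partition) :
    oPart μ.glaisherSplit.parts = glaisher 2 (rPart μ.parts) := by
  rw [oPart, glaisherSplit, Multiset.filter_add,
    Multiset.filter_eq_self.mpr fun _ => odd_of_mem_glaisher_two μ.zero_notMem_rPart,
    Multiset.filter_eq_nil.mpr, add_zero]
  simp

lemma ePart_glaisherSplit (μ : n.Partition) : ePart μ.glaisherSplit.parts = dPart μ.parts := by
  rw [ePart, glaisherSplit, Multiset.filter_add,
    Multiset.filter_eq_nil.mpr fun _ hy => Nat.not_even_iff_odd.mpr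
      (odd_of_mem_glaisher_two μ.zero_notMem_rPart hy),
    Multiset.filter_eq_self.mpr (by simp), zero_add, Multiset.map_map]
  simp

lemma glaisherSplit_injective : Function.Injective (glaisherSplit (n := n)) := by
  intro μ ν h
  have hd : dPart μ.parts = dPart ν.parts := by
    rw [← ePart_glaisherSplit, h, ePart_glaisherSplit]
  have hr : rPart μ.parts = rPart ν.parts :=
    glaisher_two_injOn (nodup_rPart _) (nodup_rPart _) <| by
      rw [← oPart_glaisherSplit, h, oPart_glaisherSplit]
  ext1
  rw [← rPart_add_two_nsmul_dPart μ.parts, ← rPart_add_two_nsmul_dPart ν.parts, hr, hd]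

lemma sum_card_oPart_eq_sum_card_glaisher_rPart :
    ∑ μ : n.Partition, Multiset.card (oPart μ.parts) =
      ∑ μ : n.Partition, Multiset.card (glaisher 2 (rPart μ.parts)) := by
  rw [← (Finite.injective_iff_bijective.mp glaisherSplit_injective).sum_comp]
  simp only [oPart_glaisherSplit]

end Nat.Partition

/-- `Σ_{λ ∈ P(n)} ℓ(λ) = Σ_{λ ∈ P(n)} (ℓ((λ^r)~) + ℓ(λ^e))`, where `(λ^r)~` is the
2-Glaisher image of the strict partition `λ^r`. -/
theorem stmt5 (n : ℕ) :
    ∑ μ : Nat.Partition n, Multiset.card μ.parts =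
      ∑ μ : Nat.Partition n, ((glaisher 2 (rPart μ.parts)).card + (ePart μ.parts).card) := by
  rw [Finset.sum_add_distrib, ← Nat.Partition.sum_card_oPart_eq_sum_card_glaisher_rPart,
    ← Finset.sum_add_distrib]
  exact Finset.sum_congr rfl fun μ _ => card_eq_card_oPart_add_card_ePart μ.parts
end

section
/- For every natural number n, Σ_{λ ∈ P(n)} ℓ(λ^d) = Σ_{λ ∈ P(n)} (ℓ((λ^r)~) − ℓ(λ^r)), where the sums run over all partitions λ of n and (λ^r)~ denotes the 2-Glaisher image of the strict partition λ^r. (This common value is the exponent k_n for which the determinant of the transition matrix A_n satisfies |det A_n| = 2^{k_n}.) -/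
/-
Let `M i = ∑_{λ ⊢ n} m_i(λ)`. Removing `t` copies of `i` is a bijection onto the partitions of
`n - t * i`, so the number of `λ ⊢ n` with `m_i(λ) ≥ t` depends only on `t * i`. Summing over `t`
(layer-cake) gives `∑_λ ⌊m_i(λ)/2⌋ = M (2 * i)`, hence `∑_λ (m_i(λ) mod 2) = M i - 2 * M (2 * i)`.
The left side is therefore `∑_i M (2 * i)` and the right side
`∑_i (2 ^ ν₂ i - 1) * (M i - 2 * M (2 * i))`, and these agree because both weighted sums
collapse onto the odd indices.
-/

open Finset

theorem sum_Icc_eq_sum_odd_add_sum_two_mul {M : Type*} [AddCommMonoid M] {N : ℕ} (F : ℕ → M)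
    (hF : ∀ m, N < m → F m = 0) :
    ∑ i ∈ Icc 1 N, F i = ∑ i ∈ Icc 1 N with Odd i, F i + ∑ j ∈ Icc 1 N, F (2 * j) := by
  rw [← sum_filter_add_sum_filter_not _ (fun i => Odd i)]
  congr 1
  symm
  apply sum_bij_ne_zero (fun j _ _ => 2 * j)
  · intro j hj hFj
    simp only [mem_filter, mem_Icc, Nat.not_odd_iff_even] at hj ⊢
    exact ⟨⟨by omega, not_lt.mp (mt (hF _) hFj)⟩, even_two_mul j⟩
  · intro _ _ _ _ _ _ h; omega
  · intro i hi hFi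
    simp only [mem_filter, mem_Icc, Nat.not_odd_iff_even] at hi
    obtain ⟨⟨h1, h2⟩, j, rfl⟩ := hi
    exact ⟨j, by simp only [mem_Icc]; omega, by rwa [two_mul], two_mul j⟩
  · intros; rfl

theorem factorization_two_mul_apply_two (i : ℕ) (hi : i ≠ 0) :
    (2 * i).factorization 2 = i.factorization 2 + 1 := by
  rw [Nat.factorization_mul two_ne_zero hi, Finsupp.add_apply,
    Nat.prime_two.factorization_self, add_comm]

/- Since `2 ^ ν₂ i * 2 = 2 ^ ν₂ (2 * i)`, the sum of `2 ^ ν₂ i * (M i - 2 * M (2 * i))` is the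
sum of `M` over odd indices, and so is that of `M i - 2 * M (2 * i)` plus `∑ M (2 * i)`. -/
theorem sum_two_pow_factorization_sub_one_mul {N : ℕ} (M : ℕ → ℤ) (hM : ∀ m, N < m → M m = 0) :
    ∑ i ∈ Icc 1 N, (2 ^ i.factorization 2 - 1) * (M i - 2 * M (2 * i)) =
      ∑ i ∈ Icc 1 N, M (2 * i) := by
  have hP : ∀ i ∈ Icc 1 N,
      2 ^ i.factorization 2 * (2 * M (2 * i)) = 2 ^ (2 * i).factorization 2 * M (2 * i) := by
    intro i hi
    rw [factorization_two_mul_apply_two i (by simp at hi; omega), pow_succ]; ring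
  have hodd : ∀ i ∈ {i ∈ Icc 1 N | Odd i}, (2 : ℤ) ^ i.factorization 2 * M i = M i := by
    intro i hi
    rw [Nat.factorization_eq_zero_of_not_dvd (by simp at hi; exact hi.2.not_two_dvd_nat)]; simp
  have h1 := sum_Icc_eq_sum_odd_add_sum_two_mul (fun i => (2 : ℤ) ^ i.factorization 2 * M i)
    (fun m (hm : N < m) => by simp [hM m hm])
  have h2 := sum_Icc_eq_sum_odd_add_sum_two_mul M hM
  simp only [sub_one_mul, mul_sub, sum_sub_distrib, sum_congr rfl hP, sum_congr rfl hodd] at h1 ⊢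
  rw [h1, h2, ← mul_sum]
  ring

theorem card_filter_Icc_mul_le {d m N : ℕ} (hd : 0 < d) (hm : m ≤ d * N) :
    #{k ∈ Icc 1 N | d * k ≤ m} = m / d := by
  have : {k ∈ Icc 1 N | d * k ≤ m} = Icc 1 (m / d) := by
    ext k
    simp only [mem_filter, mem_Icc, Nat.le_div_iff_mul_le hd, mul_comm d]
    constructor
    · rintro ⟨⟨h1, -⟩, h⟩; exact ⟨h1, h⟩
    · rintro ⟨h1, h⟩; exact ⟨⟨h1, by nlinarith⟩, h⟩
  simp [this]

theorem card_dPart (s : Multiset ℕ) : (dPart s).card = ∑ i ∈ s.toFinset, s.count i / 2 := by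
  simp [dPart]

theorem card_glaisher (p : ℕ) (s : Multiset ℕ) :
    (glaisher p s).card = (s.map fun x => p ^ x.factorization p).sum := by
  simp [glaisher, Multiset.card_bind]

theorem card_glaisher_rPart_sub_card_rPart (s : Multiset ℕ) :
    ((glaisher 2 (rPart s)).card : ℤ) - (rPart s).card =
      ∑ i ∈ s.toFinset, ((s.count i % 2 : ℕ) : ℤ) * (2 ^ i.factorization 2 - 1) := by
  have hr : rPart s = {i ∈ s.toFinset | Odd (s.count i)}.val := rfl
  rw [card_glaisher, hr, ← sum_eq_multiset_sum, card_val, card_eq_sum_ones, sum_filter,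
    sum_filter, Nat.cast_sum, Nat.cast_sum, ← sum_sub_distrib]
  refine sum_congr rfl fun i _ => ?_
  rcases Nat.mod_two_eq_zero_or_one (s.count i) with h | h <;> simp [Nat.odd_iff, h]

namespace Nat.Partition

variable {n : ℕ}

theorem sum_sub_replicate_add {p : n.Partition} {i t : ℕ} (h : t ≤ p.parts.count i) :
    (p.parts - .replicate t i).sum + t * i = n := by
  have hs := congrArg Multiset.sum
    (tsub_add_cancel_of_le (Multiset.le_count_iff_replicate_le.mp h))
  simpa [p.parts_sum] using hs

def partitionWithReplicateEquiv {i t : ℕ} (hi : 0 < i) (h : t * i ≤ n) :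
    {p : n.Partition // t ≤ p.parts.count i} ≃ (n - t * i).Partition where
  toFun p := ⟨p.1.parts - .replicate t i,
    fun hj => p.1.parts_pos (Multiset.mem_of_le tsub_le_self hj),
    by have := sum_sub_replicate_add p.2; lia⟩
  invFun q := ⟨⟨q.parts + .replicate t i, by grind [Multiset.mem_replicate],
    by simp [q.parts_sum, h]⟩, by simp⟩
  left_inv p := Subtype.ext <| Partition.ext <|
    tsub_add_cancel_of_le (Multiset.le_count_iff_replicate_le.mp p.2)
  right_inv q := Partition.ext <| add_tsub_cancel_right _ _

theorem card_filter_le_count {i : ℕ} (hi : 0 < i) (t : ℕ) :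
    #{p : n.Partition | t ≤ p.parts.count i} =
      if t * i ≤ n then Fintype.card (n - t * i).Partition else 0 := by
  split_ifs with h
  · rw [← Fintype.card_subtype]
    exact Fintype.card_congr (partitionWithReplicateEquiv hi h)
  · exact Finset.card_eq_zero.mpr <| filter_eq_empty_iff.mpr fun p _ ht =>
      h (by have := sum_sub_replicate_add ht; lia)

theorem count_le {i : ℕ} (hi : 0 < i) (p : n.Partition) : p.parts.count i ≤ n := by
  have := sum_sub_replicate_add (le_refl (p.parts.count i))
  have := Nat.le_mul_of_pos_right (p.parts.count i) hi
  lia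

theorem count_eq_zero_of_lt {i : ℕ} (hi : n < i) (p : n.Partition) : p.parts.count i = 0 :=
  Multiset.count_eq_zero.mpr fun h => (le_of_mem_parts h).not_gt hi

theorem toFinset_parts_subset_Icc (p : n.Partition) : p.parts.toFinset ⊆ Icc 1 n :=
  fun i hi => by
    rw [Multiset.mem_toFinset] at hi
    exact mem_Icc.mpr ⟨p.parts_pos hi, le_of_mem_parts hi⟩

theorem sum_toFinset_parts_eq_sum_Icc {M : Type*} [AddCommMonoid M] (p : n.Partition)
    (f : ℕ → ℕ → M) (hf : ∀ i, f i 0 = 0) :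
    ∑ i ∈ p.parts.toFinset, f i (p.parts.count i) = ∑ i ∈ Icc 1 n, f i (p.parts.count i) :=
  sum_subset p.toFinset_parts_subset_Icc fun i _ hi => by
    rw [Multiset.count_eq_zero.mpr (by simpa using hi), hf]

theorem sum_count_div_eq {d i : ℕ} (hd : 0 < d) (hi : 0 < i) :
    ∑ p : n.Partition, p.parts.count i / d =
      ∑ k ∈ Icc 1 n, if d * k * i ≤ n then Fintype.card (n - d * k * i).Partition else 0 := by
  calc ∑ p : n.Partition, p.parts.count i / d
      = ∑ p : n.Partition, #{k ∈ Icc 1 n | d * k ≤ p.parts.count i} :=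
        sum_congr rfl fun p _ => (card_filter_Icc_mul_le hd
          ((count_le hi p).trans (Nat.le_mul_of_pos_left n hd))).symm
    _ = ∑ k ∈ Icc 1 n, #{p : n.Partition | d * k ≤ p.parts.count i} :=
        sum_card_bipartiteAbove_eq_sum_card_bipartiteBelow _
    _ = _ := sum_congr rfl fun k _ => card_filter_le_count hi (d * k)

theorem sum_count_div_two {i : ℕ} (hi : 0 < i) :
    ∑ p : n.Partition, p.parts.count i / 2 = ∑ p : n.Partition, p.parts.count (2 * i) := by
  have h := sum_count_div_eq (n := n) one_pos (Nat.mul_pos two_pos hi)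
  simp only [Nat.div_one] at h
  rw [h, sum_count_div_eq two_pos hi]
  refine sum_congr rfl fun k _ => ?_
  rw [one_mul, mul_right_comm, mul_comm k]

theorem sum_count_mod_two_add {i : ℕ} (hi : 0 < i) :
    ∑ p : n.Partition, p.parts.count i % 2 + 2 * ∑ p : n.Partition, p.parts.count (2 * i) =
      ∑ p : n.Partition, p.parts.count i := by
  rw [← sum_count_div_two hi, mul_sum, ← sum_add_distrib]
  exact sum_congr rfl fun p _ => Nat.mod_add_div _ _

end Nat.Partition

/-- `k_n = Σ_{λ ∈ P(n)} ℓ(λ^d) = Σ_{λ ∈ P(n)} (ℓ((λ^r)~) − ℓ(λ^r))`, where `(λ^r)~` is the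
2-Glaisher image of `λ^r`. -/
theorem stmt12 (n : ℕ) :
    ∑ μ : Nat.Partition n, ((dPart μ.parts).card : ℤ) =
      ∑ μ : Nat.Partition n,
        (((glaisher 2 (rPart μ.parts)).card : ℤ) - ((rPart μ.parts).card : ℤ)) := by
  set M : ℕ → ℤ := fun i => ((∑ μ : n.Partition, μ.parts.count i : ℕ) : ℤ)
  have hM : ∀ i, n < i → M i = 0 := fun i hi => by
    simp [M, Nat.Partition.count_eq_zero_of_lt hi]
  calc ∑ μ : n.Partition, ((dPart μ.parts).card : ℤ)
      = ∑ μ : n.Partition, ∑ i ∈ Icc 1 n, ((μ.parts.count i / 2 : ℕ) : ℤ) :=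
        sum_congr rfl fun μ _ => by
          rw [card_dPart, Nat.cast_sum,
            μ.sum_toFinset_parts_eq_sum_Icc (fun _ c => ((c / 2 : ℕ) : ℤ)) (by simp)]
    _ = ∑ i ∈ Icc 1 n, M (2 * i) := by
        rw [sum_comm]
        refine sum_congr rfl fun i hi => ?_
        simp only [M]; exact_mod_cast Nat.Partition.sum_count_div_two (mem_Icc.mp hi).1
    _ = ∑ i ∈ Icc 1 n, (2 ^ i.factorization 2 - 1) * (M i - 2 * M (2 * i)) :=
        (sum_two_pow_factorization_sub_one_mul M hM).symm
    _ = ∑ i ∈ Icc 1 n, ∑ μ : n.Partition,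
          ((μ.parts.count i % 2 : ℕ) : ℤ) * (2 ^ i.factorization 2 - 1) := by
        refine sum_congr rfl fun i hi => ?_
        have h := Nat.Partition.sum_count_mod_two_add (n := n) (mem_Icc.mp hi).1
        have h' : ∑ μ : n.Partition, ((μ.parts.count i % 2 : ℕ) : ℤ) = M i - 2 * M (2 * i) :=
          eq_sub_of_add_eq (by simp only [M]; exact_mod_cast h)
        rw [← sum_mul, mul_comm, h']
    _ = _ := by
        rw [sum_comm]
        refine sum_congr rfl fun μ _ => ?_
        rw [card_glaisher_rPart_sub_card_rPart, μ.sum_toFinset_parts_eq_sum_Icc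
          (fun i c => ((c % 2 : ℕ) : ℤ) * (2 ^ i.factorization 2 - 1)) (by simp)]
end

section
/- Let p be a prime number and n a natural number. Then the number of partitions of n equals Σ_{n₀ + p·n₁ = n} |P^{r(p)}(n₀)| · |P(n₁)|, where the sum runs over all pairs of natural numbers (n₀, n₁) with n₀ + p·n₁ = n, P^{r(p)}(n₀) is the set of p-regular partitions of n₀, and P(n₁) is the set of partitions of n₁. -/
open Multiset

section Multiplicities

variable (p : ℕ) (s t : Multiset ℕ)

lemma count_sum_replicate_count (f : ℕ → ℕ) (hf : f 0 = 0) (j : ℕ) :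
    count j (∑ i ∈ s.toFinset, replicate (f (s.count i)) i) = f (s.count j) := by
  simp only [Multiset.count_sum', count_replicate, Finset.sum_ite_eq', mem_toFinset]
  split_ifs with hj
  · rfl
  · rw [count_eq_zero_of_notMem hj, hf]

lemma count_rPartP (j : ℕ) : (rPartP p s).count j = s.count j % p :=
  count_sum_replicate_count s (· % p) (Nat.zero_mod p) j

lemma count_dPartP (j : ℕ) : (dPartP p s).count j = s.count j / p :=
  count_sum_replicate_count s (· / p) (Nat.zero_div p) j

lemma rPartP_le : rPartP p s ≤ s :=
  le_iff_count.mpr fun j => (count_rPartP p s j).trans_le (Nat.mod_le _ _)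

lemma dPartP_le : dPartP p s ≤ s :=
  le_iff_count.mpr fun j => (count_dPartP p s j).trans_le (Nat.div_le_self _ _)

lemma rPartP_add_nsmul_dPartP : rPartP p s + p • dPartP p s = s := by
  ext j
  rw [count_add, count_nsmul, count_rPartP, count_dPartP, Nat.mod_add_div]

lemma sum_nsmul_eq_mul : (p • s).sum = p * s.sum :=
  _root_.map_nsmul (sumAddMonoidHom : Multiset ℕ →+ ℕ) p s

lemma sum_rPartP_add_mul_sum_dPartP : (rPartP p s).sum + p * (dPartP p s).sum = s.sum := by
  rw [← sum_nsmul_eq_mul, ← sum_add, rPartP_add_nsmul_dPartP]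

variable {p s}

lemma rPartP_add_nsmul (hs : ∀ j, s.count j < p) : rPartP p (s + p • t) = s := by
  ext j
  rw [count_rPartP, count_add, count_nsmul, Nat.add_mul_mod_self_left, Nat.mod_eq_of_lt (hs j)]

lemma dPartP_add_nsmul (hs : ∀ j, s.count j < p) : dPartP p (s + p • t) = t := by
  ext j
  rw [count_dPartP, count_add, count_nsmul, Nat.add_mul_div_left _ _ (hs j).pos,
    Nat.div_eq_of_lt (hs j), zero_add]

end Multiplicities

namespace Nat.Partition

def IsRegular (p : ℕ) {n : ℕ} (μ : Partition n) : Prop :=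
  ∀ i ∈ μ.parts, μ.parts.count i < p

instance (p n : ℕ) : DecidablePred (IsRegular p : Partition n → Prop) :=
  fun μ => inferInstanceAs (Decidable (∀ i ∈ μ.parts, μ.parts.count i < p))

lemma IsRegular.count_lt {p n : ℕ} {μ : Partition n} (hμ : μ.IsRegular p) (hp : 0 < p) (j : ℕ) :
    μ.parts.count j < p := by
  by_cases hj : j ∈ μ.parts
  · exact hμ j hj
  · rwa [count_eq_zero_of_notMem hj]

def weightedAntidiagonal (p n : ℕ) : Finset (ℕ × ℕ) :=
  (Finset.range (n + 1) ×ˢ Finset.range (n + 1)).filter (fun q => q.1 + p * q.2 = n)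

lemma mem_weightedAntidiagonal {p n : ℕ} (hp : 0 < p) {q : ℕ × ℕ} :
    q ∈ weightedAntidiagonal p n ↔ q.1 + p * q.2 = n := by
  simp only [weightedAntidiagonal, Finset.mem_filter, Finset.mem_product, Finset.mem_range,
    and_iff_right_iff_imp]
  intro hq
  have : q.2 ≤ p * q.2 := Nat.le_mul_of_pos_left _ hp
  omega

variable {p : ℕ}

abbrev RegularProd (p n : ℕ) :=
  Σ q : weightedAntidiagonal p n, {μ : Partition q.1.1 // μ.IsRegular p} × Partition q.1.2

lemma RegularProd.ext {n : ℕ} {x y : RegularProd p n}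
    (h₁ : x.2.1.1.parts = y.2.1.1.parts) (h₂ : x.2.2.parts = y.2.2.parts) : x = y := by
  obtain ⟨⟨⟨a, b⟩, hab⟩, ⟨μ, hμ⟩, ν⟩ := x
  obtain ⟨⟨⟨a', b'⟩, hab'⟩, ⟨μ', hμ'⟩, ν'⟩ := y
  obtain rfl : a = a' := (μ.parts_sum.symm.trans (congrArg sum h₁)).trans μ'.parts_sum
  obtain rfl : b = b' := (ν.parts_sum.symm.trans (congrArg sum h₂)).trans ν'.parts_sum
  obtain rfl : μ = μ' := Partition.ext h₁
  obtain rfl : ν = ν' := Partition.ext h₂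
  rfl

def equivRegularProd (hp : 0 < p) (n : ℕ) : Partition n ≃ RegularProd p n where
  toFun lam :=
    ⟨⟨((rPartP p lam.parts).sum, (dPartP p lam.parts).sum), (mem_weightedAntidiagonal hp).mpr
        (by rw [sum_rPartP_add_mul_sum_dPartP, lam.parts_sum])⟩,
      ⟨⟨rPartP p lam.parts, fun hi => lam.parts_pos (mem_of_le (rPartP_le p _) hi), rfl⟩,
        fun i _ => (count_rPartP p _ i).trans_lt (Nat.mod_lt _ hp)⟩,
      ⟨dPartP p lam.parts, fun hi => lam.parts_pos (mem_of_le (dPartP_le p _) hi), rfl⟩⟩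
  invFun x :=
    { parts := x.2.1.1.parts + p • x.2.2.parts
      parts_pos := fun hi => (mem_add.mp hi).elim x.2.1.1.parts_pos
        fun hi => x.2.2.parts_pos (mem_nsmul.mp hi).2
      parts_sum := by
        rw [sum_add, sum_nsmul_eq_mul, x.2.1.1.parts_sum, x.2.2.parts_sum,
          (mem_weightedAntidiagonal hp).mp x.1.2] }
  left_inv lam := Partition.ext (rPartP_add_nsmul_dPartP p lam.parts)
  right_inv x := RegularProd.ext (rPartP_add_nsmul _ (x.2.1.2.count_lt hp))
    (dPartP_add_nsmul _ (x.2.1.2.count_lt hp))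

end Nat.Partition

/-- `|P(n)| = Σ_{n₀ + p n₁ = n} |P^{r(p)}(n₀)| ⬝ |P(n₁)|`, where `P^{r(p)}(n₀)` is the set of
`p`-regular partitions of `n₀`. -/
theorem stmt17 (p : ℕ) (hp : p.Prime) (n : ℕ) :
    Fintype.card (Nat.Partition n) =
      ∑ q ∈ (Finset.range (n + 1) ×ˢ Finset.range (n + 1)).filter
          (fun q => q.1 + p * q.2 = n),
        (Finset.univ.filter (fun μ : Nat.Partition q.1 =>
            ∀ i ∈ μ.parts, μ.parts.count i < p)).card
          * Fintype.card (Nat.Partition q.2) := by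
  rw [Fintype.card_congr (Nat.Partition.equivRegularProd hp.pos n), Fintype.card_sigma]
  simp only [Fintype.card_prod, Fintype.card_subtype]
  exact Finset.sum_coe_sort (Nat.Partition.weightedAntidiagonal p n) fun q =>
    (Finset.univ.filter (Nat.Partition.IsRegular p : Nat.Partition q.1 → Prop)).card *
      Fintype.card (Nat.Partition q.2)
end
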